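/- arXiv:2205.08434 — 2 statements merged into one kernel-verified Lean document; each statement's English description precedes it below -/
import Mathlib

section
/- Let f: D ⊆ ℝ^d → ℝ be of class C^μ with all μ-th order partial derivatives Lipschitz with constant ϑ on a neighborhood B(a) of a. Then for any unit vector ν and h > 0 with a + hν ∈ B(a), the difference between the truncated Taylor directional series and the finite difference quotient satisfies |∑_{k=1}^{μ} (h^{k-1}/k!) (ν·∇)^k f(a) − (f(a+hν) − f(a))/h| ≤ (h^μ / (μ+1)!) · ϑ · ‖ν‖₁^μ. -/
/-!
Restrict `f` to the segment, `g t = f (a + t • ν)`, so that `g^(k) t = D^k f (a + t ν) (ν, …, ν)`.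
Taylor's formula of order `μ - 1` with integral remainder, minus the `μ`-th Taylor term, gives
`g h - ∑_{k ≤ μ} h^k / k! g^(k) 0 = ∫₀ʰ (h - t)^(μ-1) / (μ-1)! (g^(μ) t - g^(μ) 0) dt`.
Expanding `ν` in the standard basis, the Lipschitz bound on the partial derivatives of order `μ`
gives `|g^(μ) t - g^(μ) 0| ≤ ϑ ‖ν‖₁^μ t`, and the kernel integrates against `t` to
`h^(μ+1) / (μ+1)!`. Dividing by `h` gives the bound.
-/

open Set
open scoped Nat

theorem MultilinearMap.norm_apply_const_le_of_basis {ι E F : Type*} [Fintype ι]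
    [AddCommGroup E] [Module ℝ E] [SeminormedAddCommGroup F] [NormedSpace ℝ F] {n : ℕ}
    (M : MultilinearMap ℝ (fun _ : Fin n => E) F) (b : Module.Basis ι ℝ E) {C : ℝ}
    (hC : ∀ m : Fin n → ι, ‖M (fun j => b (m j))‖ ≤ C) (v : E) :
    ‖M (fun _ => v)‖ ≤ (∑ i, |b.repr v i|) ^ n * C := by
  classical
  calc ‖M (fun _ => v)‖ = ‖M (fun _ => ∑ i, b.repr v i • b i)‖ := by rw [b.sum_repr]
    _ = ‖∑ m : Fin n → ι, (∏ j, b.repr v (m j)) • M (fun j => b (m j))‖ := by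
        simp only [M.map_sum, M.map_smul_univ]
    _ ≤ ∑ m : Fin n → ι, (∏ j, |b.repr v (m j)|) * C := by
        refine (norm_sum_le _ _).trans (Finset.sum_le_sum fun m _ => ?_)
        rw [norm_smul, Real.norm_eq_abs, Finset.abs_prod]
        exact mul_le_mul_of_nonneg_left (hC m) (by positivity)
    _ = (∑ i, |b.repr v i|) ^ n * C := by
        rw [← Finset.sum_mul, Finset.sum_pow', Fintype.piFinset_univ]

theorem MultilinearMap.abs_apply_const_le_of_single {ι : Type*} [Fintype ι] [DecidableEq ι]
    {n : ℕ} (M : MultilinearMap ℝ (fun _ : Fin n => EuclideanSpace ℝ ι) ℝ) {C : ℝ}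
    (hC : ∀ m : Fin n → ι, |M (fun j => EuclideanSpace.single (m j) 1)| ≤ C)
    (v : EuclideanSpace ℝ ι) : |M (fun _ => v)| ≤ (∑ i, |v i|) ^ n * C := by
  simpa using
    M.norm_apply_const_le_of_basis (EuclideanSpace.basisFun ι ℝ).toBasis (by simpa using hC) v

section LineRestriction

variable {𝕜 E F : Type*} [NontriviallyNormedField 𝕜] [NormedAddCommGroup E]
  [NormedSpace 𝕜 E] [NormedAddCommGroup F] [NormedSpace 𝕜 F] {f : E → F} {n : WithTop ℕ∞} {k : ℕ}

theorem iteratedDeriv_comp_add_smul {U : Set E} (hU : IsOpen U) (hf : ContDiffOn 𝕜 n f U)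
    (hk : k ≤ n) (a v : E) {t : 𝕜} (ht : a + t • v ∈ U) :
    iteratedDeriv k (fun s => f (a + s • v)) t =
      iteratedFDeriv 𝕜 k f (a + t • v) (fun _ => v) := by
  set L : 𝕜 →L[𝕜] E := ContinuousLinearMap.smulRight (1 : 𝕜 →L[𝕜] 𝕜) v
  set V := (a + ·) ⁻¹' U
  have hV : IsOpen V := hU.preimage (by fun_prop)
  have hLV : IsOpen (L ⁻¹' V) := hV.preimage L.continuous
  have hF : ContDiffOn 𝕜 n (fun x => f (a + x)) V := hf.comp (by fun_prop) (mapsTo_preimage _ _)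
  have hcomp : (fun s => f (a + s • v)) = (fun x => f (a + x)) ∘ L := rfl
  rw [iteratedDeriv_eq_iteratedFDeriv, ← iteratedFDerivWithin_of_isOpen k hLV ht, hcomp,
    L.iteratedFDerivWithin_comp_right hF hV.uniqueDiffOn hLV.uniqueDiffOn ht hk,
    ContinuousMultilinearMap.compContinuousLinearMap_apply,
    iteratedFDerivWithin_of_isOpen k hV (show L t ∈ V from ht), iteratedFDeriv_comp_add_left]
  simp [L]

theorem iteratedDerivWithin_comp_add_smul {s : Set E} {S : Set 𝕜} (hf : ContDiffOn 𝕜 n f s)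
    (hk : k ≤ n) (a v : E) {t : 𝕜} (hS : UniqueDiffOn 𝕜 S) (htS : t ∈ S)
    (ht : a + t • v ∈ interior s) :
    iteratedDerivWithin k (fun r => f (a + r • v)) S t =
      iteratedFDeriv 𝕜 k f (a + t • v) (fun _ => v) := by
  have hcomp : ContDiffAt 𝕜 k (fun r => f (a + r • v)) t :=
    ((hf.contDiffAt (mem_interior_iff_mem_nhds.1 ht)).comp t
      (by fun_prop : ContDiffAt 𝕜 n (fun r : 𝕜 => a + r • v) t)).of_le hk
  rw [iteratedDerivWithin_eq_iteratedDeriv hS hcomp htS]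
  exact iteratedDeriv_comp_add_smul isOpen_interior (hf.mono interior_subset) hk a v ht

end LineRestriction

theorem Convex.add_smul_mem_interior_of_mem_Ico {E : Type*} [AddCommGroup E] [Module ℝ E]
    [TopologicalSpace E] [IsTopologicalAddGroup E] [ContinuousSMul ℝ E] {s : Set E}
    (hs : Convex ℝ s) {x v : E} {h t : ℝ} (hx : x ∈ interior s) (hy : x + h • v ∈ s)
    (ht : t ∈ Ico 0 h) : x + t • v ∈ interior s := by
  have hh : 0 < h := ht.1.trans_lt ht.2
  have hcombo : x + t • v = (1 - t / h) • x + (t / h) • (x + h • v) := by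
    rw [smul_add, smul_smul, div_mul_cancel₀ t hh.ne', ← add_assoc, ← add_smul,
      sub_add_cancel, one_smul]
  rw [hcombo]
  exact hs.combo_interior_self_mem_interior hx hy (sub_pos.2 ((div_lt_one hh).2 ht.2))
    (div_nonneg ht.1 hh.le) (sub_add_cancel _ _)

theorem integral_sub_pow_div_factorial (n : ℕ) (x₀ x : ℝ) :
    ∫ t in x₀..x, (x - t) ^ n / n ! = (x - x₀) ^ (n + 1) / (n + 1)! := by
  rw [intervalIntegral.integral_div, intervalIntegral.integral_comp_sub_left (fun t => t ^ n),
    integral_pow, Nat.factorial_succ]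
  push_cast
  field_simp
  ring

theorem integral_sub_pow_div_factorial_mul_sub (n : ℕ) (x₀ x : ℝ) :
    ∫ t in x₀..x, (x - t) ^ n / n ! * (t - x₀) = (x - x₀) ^ (n + 2) / (n + 2)! := by
  have hsplit : ∀ t, (x - t) ^ n / n ! * (t - x₀) =
      (x - x₀) * ((x - t) ^ n / n !) - (n + 1) * ((x - t) ^ (n + 1) / (n + 1)!) := by
    intro t
    rw [Nat.factorial_succ]
    push_cast
    field_simp
    ring
  simp_rw [hsplit]
  rw [intervalIntegral.integral_sub, intervalIntegral.integral_const_mul,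
    intervalIntegral.integral_const_mul, integral_sub_pow_div_factorial,
    integral_sub_pow_div_factorial]
  · rw [Nat.factorial_succ (n + 1)]
    push_cast
    field_simp
    ring
  all_goals exact (by fun_prop : Continuous _).intervalIntegrable _ _

theorem norm_sub_taylorWithinEval_succ_le {F : Type*} [NormedAddCommGroup F] [NormedSpace ℝ F]
    [CompleteSpace F] {g : ℝ → F} {n : ℕ} {x₀ x L : ℝ} (hx : x₀ ≤ x)
    (hg : ContDiffOn ℝ (n + 1) g (Icc x₀ x))
    (hL : ∀ t ∈ Ioo x₀ x, ‖iteratedDerivWithin (n + 1) g (Icc x₀ x) t -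
      iteratedDerivWithin (n + 1) g (Icc x₀ x) x₀‖ ≤ L * (t - x₀)) :
    ‖g x - taylorWithinEval g (n + 1) (Icc x₀ x) x₀ x‖ ≤
      L * (x - x₀) ^ (n + 2) / (n + 2)! := by
  set D := iteratedDerivWithin (n + 1) g (Icc x₀ x)
  have hD : ContinuousOn D (uIcc x₀ x) := by
    rcases hx.eq_or_lt with rfl | hlt
    · simp
    rw [uIcc_of_le hx]
    exact hg.continuousOn_iteratedDerivWithin le_rfl (uniqueDiffOn_Icc hlt)
  have hkernel : Continuous fun t : ℝ => (x - t) ^ n / n ! := by fun_prop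
  have hrem : g x - taylorWithinEval g (n + 1) (Icc x₀ x) x₀ x =
      ∫ t in x₀..x, ((x - t) ^ n / n !) • (D t - D x₀) := by
    have hint : IntervalIntegrable (fun t => ((x - t) ^ n / n !) • D t) MeasureTheory.volume x₀ x :=
      (hkernel.continuousOn.smul hD).intervalIntegrable
    simp_rw [smul_sub]
    rw [intervalIntegral.integral_sub hint (Continuous.intervalIntegrable (by fun_prop) _ _),
      intervalIntegral.integral_smul_const, integral_sub_pow_div_factorial, taylorWithinEval_succ,
      ← sub_sub, ← uIcc_of_le hx, taylor_integral_remainder (by rwa [uIcc_of_le hx]),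
      Nat.factorial_succ, uIcc_of_le hx]
    congr 2
    push_cast
    ring
  calc ‖g x - taylorWithinEval g (n + 1) (Icc x₀ x) x₀ x‖
      ≤ ∫ t in x₀..x, (x - t) ^ n / n ! * (L * (t - x₀)) := by
        rw [hrem]
        refine intervalIntegral.norm_integral_le_of_norm_le hx ?_
          (Continuous.intervalIntegrable (by fun_prop) _ _)
        filter_upwards [MeasureTheory.volume.ae_ne x] with t hne ht
        have hpos : 0 ≤ (x - t) ^ n / n ! := by have := sub_nonneg.2 ht.2; positivity
        rw [norm_smul, Real.norm_of_nonneg hpos]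
        exact mul_le_mul_of_nonneg_left (hL t ⟨ht.1, lt_of_le_of_ne ht.2 hne⟩) hpos
    _ = L * (x - x₀) ^ (n + 2) / (n + 2)! := by
        simp_rw [mul_left_comm _ L]
        rw [intervalIntegral.integral_const_mul, integral_sub_pow_div_factorial_mul_sub,
          mul_div_assoc]

theorem Convex.norm_sub_sum_iteratedFDeriv_le {E F : Type*} [NormedAddCommGroup E]
    [NormedSpace ℝ E] [NormedAddCommGroup F] [NormedSpace ℝ F] [CompleteSpace F] {f : E → F}
    {s : Set E} {n : ℕ} {a v : E} {h L : ℝ} (hs : Convex ℝ s)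
    (hf : ContDiffOn ℝ (n + 1) f s) (ha : a ∈ interior s) (hav : a + h • v ∈ s) (hh : 0 < h)
    (hL : ∀ t ∈ Ioo 0 h, ‖iteratedFDeriv ℝ (n + 1) f (a + t • v) (fun _ => v) -
      iteratedFDeriv ℝ (n + 1) f a (fun _ => v)‖ ≤ L * t) :
    ‖f (a + h • v) -
        ∑ k ∈ Finset.range (n + 2), (h ^ k / k !) • iteratedFDeriv ℝ k f a (fun _ => v)‖
      ≤
      L * h ^ (n + 2) / (n + 2)! := by
  set g : ℝ → F := fun t => f (a + t • v)
  -- `a + h • v` may lie on the boundary of `s`, where `iteratedFDeriv` does not see `f` on `s`;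
  -- the integral remainder only needs the derivatives on `[0, h)`.
  have hseg : ∀ t ∈ Ico 0 h, a + t • v ∈ interior s := fun t ht =>
    hs.add_smul_mem_interior_of_mem_Ico ha hav ht
  have hg : ContDiffOn ℝ (n + 1) g (Icc 0 h) := by
    refine hf.comp (by fun_prop) fun t ht => ?_
    rcases ht.2.eq_or_lt with rfl | hlt
    · exact hav
    · exact interior_subset (hseg t ⟨ht.1, hlt⟩)
  have hgD : ∀ k ≤ n + 1, ∀ t ∈ Ico 0 h,
      iteratedDerivWithin k g (Icc 0 h) t = iteratedFDeriv ℝ k f (a + t • v) (fun _ => v) :=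
    fun k hk t ht => iteratedDerivWithin_comp_add_smul hf (by exact_mod_cast hk) a v
      (uniqueDiffOn_Icc hh) (Ico_subset_Icc_self ht) (hseg t ht)
  have hT : taylorWithinEval g (n + 1) (Icc 0 h) 0 h =
      ∑ k ∈ Finset.range (n + 2), (h ^ k / k !) • iteratedFDeriv ℝ k f a (fun _ => v) := by
    rw [taylor_within_apply]
    refine Finset.sum_congr rfl fun k hk => ?_
    rw [hgD k (Nat.lt_succ_iff.1 (Finset.mem_range.1 hk)) 0 ⟨le_rfl, hh⟩]
    simp [div_eq_inv_mul]
  have hbound := norm_sub_taylorWithinEval_succ_le hh.le hg fun t ht => by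
    rw [hgD _ le_rfl t ⟨ht.1.le, ht.2⟩, hgD _ le_rfl 0 ⟨le_rfl, hh⟩, zero_smul, add_zero,
      sub_zero]
    exact hL t ht
  rwa [hT, sub_zero] at hbound

theorem sum_Icc_pow_sub_one_sub_div (c : ℕ → ℝ) (m : ℕ) {h : ℝ} (hh : h ≠ 0) (y : ℝ) :
    ∑ k ∈ Finset.Icc 1 m, h ^ (k - 1) / k ! * c k - (y - c 0) / h =
      (∑ k ∈ Finset.range (m + 1), h ^ k / k ! * c k - y) / h := by
  rw [Finset.sum_range_succ', ← Finset.Ico_add_one_right_eq_Icc, Finset.sum_Ico_eq_sum_range,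
    eq_div_iff hh, sub_mul, Finset.sum_mul, div_mul_cancel₀ _ hh]
  simp only [add_tsub_cancel_right, add_comm 1, pow_succ, pow_zero, Nat.factorial_zero,
    Nat.cast_one, div_one, one_mul, mul_assoc, mul_comm h, mul_div_right_comm]
  ring

theorem taylor_remainder_bound_general
    (d μ : ℕ) (hμ : 1 ≤ μ)
    (f : EuclideanSpace ℝ (Fin d) → ℝ)
    (B : Set (EuclideanSpace ℝ (Fin d)))
    (a ν : EuclideanSpace ℝ (Fin d)) (h ϑ : ℝ)
    (hB : B ∈ nhds a) (hBconv : Convex ℝ B)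
    (hsmooth : ContDiffOn ℝ μ f B)
    (hlip : ∀ (m : Fin μ → Fin d), ∀ x ∈ B, ∀ y ∈ B,
      |iteratedFDeriv ℝ μ f x (fun j => EuclideanSpace.single (m j) (1 : ℝ)) -
       iteratedFDeriv ℝ μ f y (fun j => EuclideanSpace.single (m j) (1 : ℝ))| ≤ ϑ * ‖x - y‖)
    (hν : ‖ν‖ = 1) (hh : 0 < h) (hmem : a + h • ν ∈ B) :
    |(∑ k ∈ Finset.Icc 1 μ,
        (h ^ (k - 1) / (Nat.factorial k : ℝ)) *
          iteratedFDeriv ℝ k f a (fun _ : Fin k => ν)) -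
      (f (a + h • ν) - f a) / h|
      ≤ h ^ μ / (Nat.factorial (μ + 1) : ℝ) * ϑ * (∑ i, |ν i|) ^ μ := by
  obtain ⟨n, rfl⟩ : ∃ n, μ = n + 1 := ⟨μ - 1, by omega⟩
  have ha : a ∈ interior B := mem_interior_iff_mem_nhds.2 hB
  have hL : ∀ t ∈ Ioo 0 h, ‖iteratedFDeriv ℝ (n + 1) f (a + t • ν) (fun _ => ν) -
      iteratedFDeriv ℝ (n + 1) f a (fun _ => ν)‖ ≤ (∑ i, |ν i|) ^ (n + 1) * ϑ * t := by
    intro t ht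
    have hx : a + t • ν ∈ B :=
      interior_subset (hBconv.add_smul_mem_interior_of_mem_Ico ha hmem ⟨ht.1.le, ht.2⟩)
    have hdist : ‖t • ν‖ = t := by rw [norm_smul, hν, Real.norm_of_nonneg ht.1.le, mul_one]
    have := (iteratedFDeriv ℝ (n + 1) f (a + t • ν) - iteratedFDeriv ℝ (n + 1) f a
      ).toMultilinearMap.abs_apply_const_le_of_single (C := ϑ * t)
      (fun m => by simpa [hdist] using hlip m _ hx a (interior_subset ha)) ν
    simpa [mul_assoc] using this
  have htaylor := hBconv.norm_sub_sum_iteratedFDeriv_le hsmooth ha hmem hh hL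
  have hquot := sum_Icc_pow_sub_one_sub_div (fun k => iteratedFDeriv ℝ k f a (fun _ => ν))
    (n + 1) hh.ne' (f (a + h • ν))
  rw [iteratedFDeriv_zero_apply] at hquot
  rw [hquot, abs_div, abs_of_pos hh, abs_sub_comm, div_le_iff₀ hh, ← Real.norm_eq_abs]
  calc _ ≤ (∑ i, |ν i|) ^ (n + 1) * ϑ * h ^ (n + 2) / (n + 2)! := by simpa using htaylor
    _ = h ^ (n + 1) / (n + 1 + 1)! * ϑ * (∑ i, |ν i|) ^ (n + 1) * h := by ring

/-- Taylor-remainder lemma. The truncated directional Taylor series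
minus the finite difference quotient is bounded by `(h^μ/(μ+1)!) ϑ ‖ν‖₁^μ`,
assuming `f` is `C^μ` on a convex neighborhood `B` of `a` and all `μ`-th order
partial derivatives are `ϑ`-Lipschitz on `B`. -/
theorem taylor_remainder_bound
    (d μ : ℕ) (hμ : 1 ≤ μ)
    (f : EuclideanSpace ℝ (Fin d) → ℝ)
    (B : Set (EuclideanSpace ℝ (Fin d)))
    (a ν : EuclideanSpace ℝ (Fin d)) (h ϑ : ℝ)
    (hB : B ∈ nhds a) (hBconv : Convex ℝ B)
    (hsmooth : ContDiffOn ℝ μ f B)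
    (hϑ : 0 ≤ ϑ)
    (hlip : ∀ (m : Fin μ → Fin d), ∀ x ∈ B, ∀ y ∈ B,
      |iteratedFDeriv ℝ μ f x (fun j => EuclideanSpace.single (m j) (1 : ℝ)) -
       iteratedFDeriv ℝ μ f y (fun j => EuclideanSpace.single (m j) (1 : ℝ))| ≤ ϑ * ‖x - y‖)
    (hν : ‖ν‖ = 1) (hh : 0 < h) (hmem : a + h • ν ∈ B) :
    |(∑ k ∈ Finset.Icc 1 μ,
        (h ^ (k - 1) / (Nat.factorial k : ℝ)) *
          iteratedFDeriv ℝ k f a (fun _ : Fin k => ν)) -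
      (f (a + h • ν) - f a) / h|
      ≤ h ^ μ / (Nat.factorial (μ + 1) : ℝ) * ϑ * (∑ i, |ν i|) ^ μ :=
  taylor_remainder_bound_general d μ hμ f B a ν h ϑ hB hBconv hsmooth hlip hν hh hmem
end

section
/- Gradient estimation error bound (first order, μ = 1): Let f : D ⊆ ℝ^d → ℝ be C¹ with ∇f Lipschitz with constant ϑ on a convex neighborhood B(a) of a, containing points v₁,…,v_m. Set h_k = ‖v_k − a‖, ν_k = (v_k − a)/h_k, let A ∈ ℝ^{m×d} have rows ν_k^T with full column rank d and smallest singular value σ₁ > 0, and q ∈ ℝ^m have entries (f(v_k) − f(a))/h_k. Let γ̂ = argmin_γ ‖Aγ − q‖. Then ‖∇f(a) − γ̂‖ ≤ (ϑ · h_max / (2σ₁)) · sqrt(∑_{k=1}^m ‖ν_k‖₁²), where h_max = max_k h_k. -/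
/-!
Taylor's theorem with a `ϑ`-Lipschitz gradient bounds the `k`-th entry of the residual
`A ∇f(a) - q` by `ϑ h_k / 2 ≤ (ϑ h_max / 2) ‖ν_k‖₁`, using `‖ν_k‖ = 1 ≤ ‖ν_k‖₁`.
The least-squares residual `A γ̂ - q` is orthogonal to the range of `A`, so by Pythagoras
`‖A (∇f(a) - γ̂)‖ ≤ ‖A ∇f(a) - q‖`, and `σ₁ ‖γ‖ ≤ ‖A γ‖` turns this into the bound on
`‖∇f(a) - γ̂‖`.
-/

open Set
open scoped RealInnerProductSpace

theorem norm_image_one_sub_sub_deriv_le {F : Type*} [NormedAddCommGroup F] [NormedSpace ℝ F]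
    {g g' : ℝ → F} {K : ℝ} (hg : ContinuousOn g (Icc 0 1))
    (hg' : ∀ t ∈ Ico (0 : ℝ) 1, HasDerivAt g (g' t) t)
    (hlip : ∀ t ∈ Ico (0 : ℝ) 1, ‖g' t - g' 0‖ ≤ K * t) :
    ‖g 1 - g 0 - g' 0‖ ≤ K / 2 := by
  -- fence `g t - g 0 - t • g' 0` by `K t² / 2`
  have hB (t : ℝ) : HasDerivAt (fun t => K / 2 * t ^ 2) (K * t) t := by
    simpa [mul_comm] using ((hasDerivAt_pow 2 t).const_mul (K / 2)).congr_deriv (by ring)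
  simpa using image_norm_le_of_norm_deriv_right_le_deriv_boundary
    (f := fun t => g t - g 0 - t • g' 0) (f' := fun t => g' t - g' 0)
    ((hg.sub continuousOn_const).sub (continuousOn_id.smul continuousOn_const))
    (fun t ht => (((hg' t ht).sub_const _).sub ((hasDerivAt_id t).smul_const _)).hasDerivWithinAt
      |>.congr_deriv (by simp))
    (by simp) hB hlip (right_mem_Icc.2 zero_le_one)

theorem Convex.norm_image_sub_sub_fderiv_le {E F : Type*} [NormedAddCommGroup E] [NormedSpace ℝ E]
    [NormedAddCommGroup F] [NormedSpace ℝ F] {f : E → F} {f' : E → E →L[ℝ] F} {s : Set E}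
    {x y : E} {K : ℝ} (hs : Convex ℝ s) (hf : ContinuousOn f s)
    (hf' : ∀ z ∈ interior s, HasFDerivAt f (f' z) z)
    (hlip : ∀ z ∈ interior s, ‖f' z - f' x‖ ≤ K * ‖z - x‖) (hx : x ∈ interior s) (hy : y ∈ s) :
    ‖f y - f x - f' x (y - x)‖ ≤ K / 2 * ‖y - x‖ ^ 2 := by
  set p : ℝ → E := ⇑(AffineMap.lineMap (k := ℝ) x y)
  have hp_mem : ∀ t ∈ Icc (0 : ℝ) 1, p t ∈ s := fun t ht =>
    hs.lineMap_mem (interior_subset hx) hy ht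
  have hp_int : ∀ t ∈ Ico (0 : ℝ) 1, p t ∈ interior s := fun t ht => by
    simpa only [p, AffineMap.lineMap_apply_module] using
      hs.combo_interior_closure_mem_interior hx (subset_closure hy) (sub_pos.2 ht.2) ht.1
        (sub_add_cancel 1 t)
  have hp_sub (t : ℝ) : p t - x = t • (y - x) := AffineMap.lineMap_vsub_left x y t
  have key := norm_image_one_sub_sub_deriv_le (g := f ∘ p) (g' := fun t => f' (p t) (y - x))
    (K := K * ‖y - x‖ ^ 2) (hf.comp (AffineMap.lineMap_continuous.continuousOn) hp_mem)
    (fun t ht => (hf' _ (hp_int t ht)).comp_hasDerivAt t AffineMap.hasDerivAt_lineMap)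
    (fun t ht => by
      calc ‖f' (p t) (y - x) - f' (p 0) (y - x)‖ ≤ ‖f' (p t) - f' x‖ * ‖y - x‖ := by
            simpa [p] using (f' (p t) - f' x).le_opNorm (y - x)
        _ ≤ K * ‖p t - x‖ * ‖y - x‖ := by gcongr; exact hlip _ (hp_int t ht)
        _ = K * ‖y - x‖ ^ 2 * t := by
          rw [hp_sub, norm_smul, Real.norm_of_nonneg ht.1]; ring)
  simpa [p, mul_div_right_comm] using key

section Gradient

variable {E : Type*} [NormedAddCommGroup E] [InnerProductSpace ℝ E] [CompleteSpace E]

theorem norm_fderiv_sub_fderiv_eq_norm_gradient_sub_gradient (f : E → ℝ) (x y : E) :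
    ‖fderiv ℝ f x - fderiv ℝ f y‖ = ‖gradient f x - gradient f y‖ := by
  rw [gradient, gradient, ← map_sub, LinearIsometryEquiv.norm_map]

theorem Convex.abs_image_sub_sub_inner_gradient_le {f : E → ℝ} {s : Set E} {x y : E} {K : ℝ}
    (hs : Convex ℝ s) (hsx : s ∈ nhds x) (hf : ContDiffOn ℝ 1 f s)
    (hlip : ∀ z ∈ s, ‖gradient f z - gradient f x‖ ≤ K * ‖z - x‖) (hy : y ∈ s) :
    |f y - f x - ⟪y - x, gradient f x⟫| ≤ K / 2 * ‖y - x‖ ^ 2 := by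
  have hf' : ∀ z ∈ interior s, HasFDerivAt f (fderiv ℝ f z) z := fun z hz =>
    (hf.differentiableOn_one.differentiableAt (mem_interior_iff_mem_nhds.1 hz)).hasFDerivAt
  have := hs.norm_image_sub_sub_fderiv_le hf.continuousOn hf'
    (fun z hz => (norm_fderiv_sub_fderiv_eq_norm_gradient_sub_gradient f z x).trans_le
      (hlip z (interior_subset hz)))
    (mem_interior_iff_mem_nhds.2 hsx) hy
  rwa [Real.norm_eq_abs, ← InnerProductSpace.toDual_symm_apply, real_inner_comm] at this

theorem Convex.abs_inner_gradient_sub_slope_le {f : E → ℝ} {s : Set E} {x y : E} {K : ℝ}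
    (hs : Convex ℝ s) (hsx : s ∈ nhds x) (hf : ContDiffOn ℝ 1 f s)
    (hlip : ∀ z ∈ s, ‖gradient f z - gradient f x‖ ≤ K * ‖z - x‖) (hy : y ∈ s) (hyx : y ≠ x) :
    |⟪‖y - x‖⁻¹ • (y - x), gradient f x⟫ - (f y - f x) / ‖y - x‖| ≤ K / 2 * ‖y - x‖ := by
  have hpos : 0 < ‖y - x‖ := norm_pos_iff.2 (sub_ne_zero.2 hyx)
  calc |⟪‖y - x‖⁻¹ • (y - x), gradient f x⟫ - (f y - f x) / ‖y - x‖|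
      = ‖y - x‖⁻¹ * |f y - f x - ⟪y - x, gradient f x⟫| := by
        rw [real_inner_smul_left, div_eq_inv_mul, ← mul_sub, abs_mul, abs_inv, abs_norm,
          abs_sub_comm]
    _ ≤ ‖y - x‖⁻¹ * (K / 2 * ‖y - x‖ ^ 2) := by
        gcongr; exact hs.abs_image_sub_sub_inner_gradient_le hsx hf hlip hy
    _ = K / 2 * ‖y - x‖ := by field_simp

end Gradient

section LeastSquares

variable {E F : Type*} [AddCommGroup E] [Module ℝ E] [NormedAddCommGroup F]
  [InnerProductSpace ℝ F]

theorem LinearMap.inner_sub_map_eq_zero_of_forall_norm_le (L : E →ₗ[ℝ] F) {q : F} {γ₀ : E}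
    (hmin : ∀ γ, ‖L γ₀ - q‖ ≤ ‖L γ - q‖) (γ : E) : ⟪q - L γ₀, L γ⟫ = 0 := by
  refine ((LinearMap.range L).norm_eq_iInf_iff_real_inner_eq_zero
    (L.mem_range_self γ₀)).1 (le_antisymm (le_ciInf ?_) ?_) _ (L.mem_range_self γ)
  · rintro ⟨_, γ', rfl⟩
    simpa only [norm_sub_rev q] using hmin γ'
  · exact ciInf_le ⟨0, forall_mem_range.2 fun _ => norm_nonneg _⟩
      (⟨L γ₀, L.mem_range_self γ₀⟩ : LinearMap.range L)

theorem LinearMap.norm_map_sub_le_of_forall_norm_le (L : E →ₗ[ℝ] F) {q : F} {γ₀ : E}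
    (hmin : ∀ γ, ‖L γ₀ - q‖ ≤ ‖L γ - q‖) (γ : E) : ‖L (γ - γ₀)‖ ≤ ‖L γ - q‖ := by
  have hpyth : ‖L γ - q‖ ^ 2 = ‖L (γ - γ₀)‖ ^ 2 + ‖L γ₀ - q‖ ^ 2 := by
    have horth : ⟪L (γ - γ₀), L γ₀ - q⟫ = 0 := by
      rw [real_inner_comm, ← neg_sub, inner_neg_left,
        L.inner_sub_map_eq_zero_of_forall_norm_le hmin, neg_zero]
    have hsplit : L γ - q = L (γ - γ₀) + (L γ₀ - q) := by rw [map_sub]; abel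
    rw [hsplit, norm_add_sq_real, horth]
    ring
  nlinarith [norm_nonneg (L (γ - γ₀)), norm_nonneg (L γ - q), sq_nonneg ‖L γ₀ - q‖]

end LeastSquares

theorem EuclideanSpace.norm_le_sum_abs {ι : Type*} [Fintype ι] (x : EuclideanSpace ℝ ι) :
    ‖x‖ ≤ ∑ i, |x i| := by
  rw [EuclideanSpace.norm_eq, Real.sqrt_le_left (Finset.sum_nonneg fun i _ => abs_nonneg _)]
  simpa only [Real.norm_eq_abs] using Finset.sum_sq_le_sq_sum_of_nonneg fun i _ => abs_nonneg (x i)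

theorem EuclideanSpace.norm_le_mul_sqrt_sum_sq {ι : Type*} [Fintype ι] {x : EuclideanSpace ℝ ι}
    {c : ℝ} {b : ι → ℝ} (hc : 0 ≤ c) (hx : ∀ i, |x i| ≤ c * b i) :
    ‖x‖ ≤ c * Real.sqrt (∑ i, b i ^ 2) := by
  rw [EuclideanSpace.norm_eq, ← Real.sqrt_sq hc, ← Real.sqrt_mul (sq_nonneg c), Finset.mul_sum]
  gcongr with i
  rw [Real.norm_eq_abs, ← mul_pow]
  exact pow_le_pow_left₀ (abs_nonneg _) (hx i) 2

/-- Gradient estimation error bound (first order).  If `f` is `C¹`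
with `ϑ`-Lipschitz gradient on a convex neighborhood `B` of `a` containing the
points `v k`, `h k = ‖v k - a‖`, `ν k = (v k - a)/h k`, the matrix with rows
`ν k` has full column rank with smallest singular value `σ₁ > 0`, `q k` is the
difference quotient and `γh` is the least-squares solution, then
`‖∇f(a) - γh‖ ≤ (ϑ h_max / (2 σ₁)) sqrt (∑ k ‖ν k‖₁²)`. -/
theorem dnnr_gradient_estimation_bound
    (d m : ℕ) (f : EuclideanSpace ℝ (Fin d) → ℝ)
    (B : Set (EuclideanSpace ℝ (Fin d)))
    (a : EuclideanSpace ℝ (Fin d)) (v : Fin m → EuclideanSpace ℝ (Fin d))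
    (ϑ σ₁ hmax : ℝ)
    (hB : B ∈ nhds a) (hBconv : Convex ℝ B)
    (hsmooth : ContDiffOn ℝ 1 f B)
    (hϑ : 0 ≤ ϑ)
    (hlip : ∀ x ∈ B, ∀ y ∈ B, ‖gradient f x - gradient f y‖ ≤ ϑ * ‖x - y‖)
    (hvB : ∀ k, v k ∈ B) (hva : ∀ k, v k ≠ a)
    (h : Fin m → ℝ) (ν : Fin m → EuclideanSpace ℝ (Fin d))
    (hhdef : ∀ k, h k = ‖v k - a‖)
    (hνdef : ∀ k, ν k = (h k)⁻¹ • (v k - a))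
    (hmaxdef : hmax = ⨆ k, h k)
    (q : EuclideanSpace ℝ (Fin m))
    (hqdef : ∀ k, q k = (f (v k) - f a) / h k)
    (L : EuclideanSpace ℝ (Fin d) →ₗ[ℝ] EuclideanSpace ℝ (Fin m))
    (hLdef : ∀ γ k, L γ k = ⟪ν k, γ⟫)
    (hσpos : 0 < σ₁)
    (hσ : ∀ γ : EuclideanSpace ℝ (Fin d), σ₁ * ‖γ‖ ≤ ‖L γ‖)
    (γh : EuclideanSpace ℝ (Fin d))
    (hmin : ∀ γ : EuclideanSpace ℝ (Fin d), ‖L γh - q‖ ≤ ‖L γ - q‖) :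
    ‖gradient f a - γh‖
      ≤ ϑ * hmax / (2 * σ₁) * Real.sqrt (∑ k, (∑ i, |ν k i|) ^ 2) := by
  have hhmax (k : Fin m) : h k ≤ hmax := hmaxdef ▸ le_ciSup (finite_range h).bddAbove k
  have hC : 0 ≤ ϑ * hmax / 2 := by
    have : 0 ≤ hmax := hmaxdef ▸ Real.iSup_nonneg fun k => hhdef k ▸ norm_nonneg _
    positivity
  have hresidual (k : Fin m) : |(L (gradient f a) - q) k| ≤ ϑ * hmax / 2 * ∑ i, |ν k i| := by
    have hνk : ‖ν k‖ = 1 := by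
      rw [hνdef, hhdef, norm_smul, norm_inv, norm_norm,
        inv_mul_cancel₀ (norm_ne_zero_iff.2 (sub_ne_zero.2 (hva k)))]
    calc |(L (gradient f a) - q) k| ≤ ϑ / 2 * h k := by
          rw [PiLp.sub_apply, hLdef, hqdef, hνdef, hhdef]
          exact hBconv.abs_inner_gradient_sub_slope_le hB hsmooth
            (fun z hz => hlip z hz a (mem_of_mem_nhds hB)) (hvB k) (hva k)
      _ ≤ ϑ * hmax / 2 * ‖ν k‖ := by rw [hνk]; linarith [mul_le_mul_of_nonneg_left (hhmax k) hϑ]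
      _ ≤ ϑ * hmax / 2 * ∑ i, |ν k i| := by gcongr; exact EuclideanSpace.norm_le_sum_abs _
  have hbound : σ₁ * ‖gradient f a - γh‖ ≤ ϑ * hmax / 2 * Real.sqrt (∑ k, (∑ i, |ν k i|) ^ 2) :=
    calc σ₁ * ‖gradient f a - γh‖ ≤ ‖L (gradient f a - γh)‖ := hσ _
      _ ≤ ‖L (gradient f a) - q‖ := L.norm_map_sub_le_of_forall_norm_le hmin _
      _ ≤ _ := EuclideanSpace.norm_le_mul_sqrt_sum_sq hC hresidual
  exact ((le_div_iff₀' hσpos).2 hbound).trans_eq (by ring)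
end
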